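/- Uniform convergence of Cauchy surfaces is Lorentz invariant: if Cauchy surfaces Σ_n, given as graphs of 1-Lipschitz functions f_n : ℝ³ → ℝ, converge uniformly to Σ = graph(f), and g is a proper Poincaré transformation such that g[Σ_n] and g[Σ] are again graphs of 1-Lipschitz functions g·f_n and g·f, then g·f_n converges uniformly to g·f; moreover the uniform distance scales by at most the factor (βγ + γ) where β is the boost velocity of g. -/

import Mathlib

/-!
The boost is linear and sends the vertical vector `(ε, 0)` to `(γ ε, β γ ε e₁)`. So if `(f y, y)`
is the preimage of the point `(g x, x)` of the image surface, lifting it vertically by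
`ε = fₙ y - f y` lands at `(g x + γ ε, x + v)` on the image of `graph fₙ`, with `‖v‖ = β γ |ε|`.
The 1-Lipschitz bound on `g·fₙ` moves the spatial point back to `x` at a cost of at most `‖v‖`,
so `|g·fₙ x - g·f x| ≤ (β γ + γ) |ε|`.
-/

open Filter

noncomputable section

/-- The standard Lorentz boost in the x¹-direction with velocity β and Lorentz factor γ,
acting on points (t, 𝐱) of Minkowski space ℝ × ℝ³. -/
def boost (β γ : ℝ) (p : ℝ × EuclideanSpace ℝ (Fin 3)) : ℝ × EuclideanSpace ℝ (Fin 3) :=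
  (γ * p.1 + β * γ * p.2 0,
    (WithLp.equiv 2 (Fin 3 → ℝ)).symm
      (Function.update ((WithLp.equiv 2 (Fin 3 → ℝ)) p.2) 0 (β * γ * p.1 + γ * p.2 0)))

/-- A proper Poincaré transformation: translation ∘ rotation ∘ boost. -/
def poincare (β γ : ℝ) (R : EuclideanSpace ℝ (Fin 3) ≃ₗᵢ[ℝ] EuclideanSpace ℝ (Fin 3))
    (c : ℝ × EuclideanSpace ℝ (Fin 3)) (p : ℝ × EuclideanSpace ℝ (Fin 3)) :
    ℝ × EuclideanSpace ℝ (Fin 3) :=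
  ((boost β γ p).1 + c.1, R (boost β γ p).2 + c.2)

local notation "ℝ³" => EuclideanSpace ℝ (Fin 3)

-- Time coordinate first, unlike `Set.graphOn`.
def timeGraph (f : ℝ³ → ℝ) : Set (ℝ × ℝ³) := {p | p.1 = f p.2}

theorem boost_add (β γ : ℝ) (p q : ℝ × ℝ³) : boost β γ (p + q) = boost β γ p + boost β γ q := by
  ext i
  · simp only [boost, Prod.fst_add, Prod.snd_add, PiLp.add_apply]
    ring
  · rcases eq_or_ne i 0 with rfl | hi
    · simp only [boost, Prod.fst_add, Prod.snd_add, Prod.mk_add_mk, PiLp.add_apply,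
        WithLp.equiv_apply, WithLp.ofLp_add, WithLp.equiv_symm_apply, Function.update_self]
      ring
    · simp [boost, hi]

theorem boost_time (β γ ε : ℝ) :
    boost β γ (ε, 0) = (γ * ε, EuclideanSpace.single 0 (β * γ * ε)) := by
  ext i
  · simp [boost]
  · by_cases hi : i = 0 <;> simp [boost, hi]

theorem poincare_add_time (β γ : ℝ) (R : ℝ³ ≃ₗᵢ[ℝ] ℝ³) (c : ℝ × ℝ³) (t ε : ℝ) (y : ℝ³) :
    poincare β γ R c (t + ε, y) =
      poincare β γ R c (t, y) + (γ * ε, R (EuclideanSpace.single 0 (β * γ * ε))) := by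
  rw [show ((t + ε, y) : ℝ × ℝ³) = (t, y) + (ε, 0) by simp, poincare, poincare, boost_add,
    boost_time]
  ext : 1
  · simp only [Prod.fst_add]
    ring
  · simp only [Prod.snd_add, map_add]
    abel

theorem abs_sub_le_of_timeGraph_poincare {β γ : ℝ} (hβ : 0 ≤ β) (hγ : 0 ≤ γ)
    (R : ℝ³ ≃ₗᵢ[ℝ] ℝ³) (c : ℝ × ℝ³) {f₁ f₂ g₁ g₂ : ℝ³ → ℝ} (hg₂ : LipschitzWith 1 g₂)
    (h₁ : timeGraph g₁ ⊆ poincare β γ R c '' timeGraph f₁)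
    (h₂ : Set.MapsTo (poincare β γ R c) (timeGraph f₂) (timeGraph g₂))
    {δ : ℝ} (hδ : ∀ y, |f₂ y - f₁ y| ≤ δ) (x : ℝ³) :
    |g₂ x - g₁ x| ≤ (β * γ + γ) * δ := by
  obtain ⟨⟨t, y⟩, ht : t = f₁ y, hxy⟩ := h₁ (show (g₁ x, x) ∈ timeGraph g₁ from rfl)
  subst ht
  set ε := f₂ y - f₁ y
  set v := R (EuclideanSpace.single 0 (β * γ * ε))
  have hlift : poincare β γ R c (f₂ y, y) = (g₁ x + γ * ε, x + v) := by
    rw [show f₂ y = f₁ y + ε by ring, poincare_add_time, hxy]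
    rfl
  have hval : g₂ (x + v) = g₁ x + γ * ε := by
    have h := h₂ (show (f₂ y, y) ∈ timeGraph f₂ from rfl)
    rw [hlift] at h
    exact h.symm
  have hv : ‖v‖ = β * γ * |ε| := by
    rw [R.norm_map, PiLp.norm_single, Real.norm_eq_abs, abs_mul,
      abs_of_nonneg (by positivity : 0 ≤ β * γ)]
  have hlip : |g₂ x - g₂ (x + v)| ≤ ‖v‖ := by
    simpa [Real.dist_eq] using hg₂.dist_le_mul x (x + v)
  calc |g₂ x - g₁ x| ≤ |g₂ x - g₂ (x + v)| + |g₂ (x + v) - g₁ x| := abs_sub_le _ _ _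
    _ ≤ ‖v‖ + |g₂ (x + v) - g₁ x| := by gcongr
    _ = β * γ * |ε| + γ * |ε| := by rw [hv, hval, add_sub_cancel_left, abs_mul, abs_of_nonneg hγ]
    _ = (β * γ + γ) * |ε| := by ring
    _ ≤ (β * γ + γ) * δ := by gcongr; exact hδ y

theorem tendstoUniformly_of_abs_sub_le_mul {ι α : Type*} {l : Filter ι} {F G : ι → α → ℝ}
    {f g : α → ℝ} {K : ℝ} (hK : 0 ≤ K)
    (hbound : ∀ i δ, (∀ x, |F i x - f x| ≤ δ) → ∀ x, |G i x - g x| ≤ K * δ)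
    (hF : TendstoUniformly F f l) : TendstoUniformly G g l := by
  rw [Metric.tendstoUniformly_iff] at hF ⊢
  intro ε hε
  have hη : 0 < ε / (K + 1) := by positivity
  filter_upwards [hF _ hη] with i hi x
  have hFi : ∀ x, |F i x - f x| ≤ ε / (K + 1) := fun x => by
    simpa [Real.dist_eq, abs_sub_comm] using (hi x).le
  have hKε : K * (ε / (K + 1)) < ε := by
    rw [mul_div_assoc', div_lt_iff₀ (by positivity)]
    nlinarith
  rw [Real.dist_eq, abs_sub_comm]
  exact (hbound i _ hFi x).trans_lt hKε

theorem stmt14_general (β γ : ℝ) (hβ0 : 0 ≤ β)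
    (hγ : γ = (Real.sqrt (1 - β ^ 2))⁻¹)
    (R : EuclideanSpace ℝ (Fin 3) ≃ₗᵢ[ℝ] EuclideanSpace ℝ (Fin 3))
    (c : ℝ × EuclideanSpace ℝ (Fin 3))
    (f gf : EuclideanSpace ℝ (Fin 3) → ℝ) (fn gfn : ℕ → EuclideanSpace ℝ (Fin 3) → ℝ)
    (hgfn : ∀ n, LipschitzWith 1 (gfn n))
    (hgraph : poincare β γ R c '' {p : ℝ × EuclideanSpace ℝ (Fin 3) | p.1 = f p.2}
      = {p : ℝ × EuclideanSpace ℝ (Fin 3) | p.1 = gf p.2})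
    (hgraphn : ∀ n, poincare β γ R c '' {p : ℝ × EuclideanSpace ℝ (Fin 3) | p.1 = fn n p.2}
      = {p : ℝ × EuclideanSpace ℝ (Fin 3) | p.1 = gfn n p.2})
    (hconv : TendstoUniformly (fun n => fn n) f atTop) :
    TendstoUniformly (fun n => gfn n) gf atTop ∧
    (∀ n (δ : ℝ), 0 ≤ δ → (∀ x, |fn n x - f x| ≤ δ) →
      ∀ x, |gfn n x - gf x| ≤ (β * γ + γ) * δ) := by
  have hγ0 : 0 ≤ γ := hγ ▸ inv_nonneg.mpr (Real.sqrt_nonneg _)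
  have hbound : ∀ n (δ : ℝ), (∀ x, |fn n x - f x| ≤ δ) →
      ∀ x, |gfn n x - gf x| ≤ (β * γ + γ) * δ := fun n _ hδ =>
    abs_sub_le_of_timeGraph_poincare hβ0 hγ0 R c (hgfn n) hgraph.ge
      (Set.mapsTo_iff_image_subset.mpr (hgraphn n).le) hδ
  exact ⟨tendstoUniformly_of_abs_sub_le_mul (by positivity) hbound hconv,
    fun n δ _ => hbound n δ⟩

/-- uniform convergence of Cauchy surfaces (graphs of 1-Lipschitz functions)
is Lorentz invariant, and the uniform distance scales by at most the factor βγ + γ. -/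
theorem stmt14 (β γ : ℝ) (hβ0 : 0 ≤ β) (hβ1 : β < 1)
    (hγ : γ = (Real.sqrt (1 - β ^ 2))⁻¹)
    (R : EuclideanSpace ℝ (Fin 3) ≃ₗᵢ[ℝ] EuclideanSpace ℝ (Fin 3))
    (c : ℝ × EuclideanSpace ℝ (Fin 3))
    (f gf : EuclideanSpace ℝ (Fin 3) → ℝ) (fn gfn : ℕ → EuclideanSpace ℝ (Fin 3) → ℝ)
    (hf : LipschitzWith 1 f) (hfn : ∀ n, LipschitzWith 1 (fn n))
    (hgf : LipschitzWith 1 gf) (hgfn : ∀ n, LipschitzWith 1 (gfn n))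
    (hgraph : poincare β γ R c '' {p : ℝ × EuclideanSpace ℝ (Fin 3) | p.1 = f p.2}
      = {p : ℝ × EuclideanSpace ℝ (Fin 3) | p.1 = gf p.2})
    (hgraphn : ∀ n, poincare β γ R c '' {p : ℝ × EuclideanSpace ℝ (Fin 3) | p.1 = fn n p.2}
      = {p : ℝ × EuclideanSpace ℝ (Fin 3) | p.1 = gfn n p.2})
    (hconv : TendstoUniformly (fun n => fn n) f atTop) :
    TendstoUniformly (fun n => gfn n) gf atTop ∧
    (∀ n (δ : ℝ), 0 ≤ δ → (∀ x, |fn n x - f x| ≤ δ) →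
      ∀ x, |gfn n x - gf x| ≤ (β * γ + γ) * δ) :=
  stmt14_general β γ hβ0 hγ R c f gf fn gfn hgfn hgraph hgraphn hconv
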